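/- arXiv:2409.05657 — 2 statements merged into one kernel-verified Lean document; each statement's English description precedes it below -/
import Mathlib

section
/- Let θ̂ be a global minimizer of the original empirical loss ℓ̂ over ℝ^d and θ̂′ a global minimizer of the perturbed empirical loss ℓ̂′ over ℝ^d. Assume ℓ̂ is m-strongly convex for some m > 0, and assume the loss at the swapped data points varies Lipschitz-ly between the two minimizers, i.e. |ℓ(θ̂′, z_j) − ℓ(θ̂, z_j)| ≤ L‖θ̂′ − θ̂‖₂ and |ℓ(θ̂, z_j′) − ℓ(θ̂′, z_j′)| ≤ L‖θ̂′ − θ̂‖₂ for some L > 0 (as holds when ℓ(·, z) is L-Lipschitz in θ). Then ‖θ̂ − θ̂′‖₂ ≤ 4L/(m n). -/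
noncomputable section

/-- `f` is `m`-strongly convex on `ℝ^d`: `x ↦ f x - (m/2)‖x‖₂²` is convex. -/
def StrongConvexOnUniv {d : ℕ} (m : ℝ) (f : EuclideanSpace ℝ (Fin d) → ℝ) : Prop :=
  ConvexOn ℝ Set.univ fun x => f x - m / 2 * ‖x‖ ^ 2

/-- The original empirical loss `ℓ̂(θ) = (1/n) ∑ᵢ ℓ(θ, zᵢ)`. -/
def empLoss {d n : ℕ} {Z : Type*} (ℓ : EuclideanSpace ℝ (Fin d) → Z → ℝ)
    (z : Fin n → Z) (θ : EuclideanSpace ℝ (Fin d)) : ℝ :=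
  (1 / (n : ℝ)) * ∑ i, ℓ θ (z i)

/-- The perturbed empirical loss `ℓ̂′(θ) = (1/n) ∑_{i≠j} ℓ(θ, zᵢ) + (1/n) ℓ(θ, zⱼ′)`. -/
def empLossPert {d n : ℕ} {Z : Type*} (ℓ : EuclideanSpace ℝ (Fin d) → Z → ℝ)
    (z : Fin n → Z) (j : Fin n) (z' : Z) (θ : EuclideanSpace ℝ (Fin d)) : ℝ :=
  (1 / (n : ℝ)) * ∑ i ∈ Finset.univ.erase j, ℓ θ (z i) + (1 / (n : ℝ)) * ℓ θ z'

/-! A strongly convex function grows at least quadratically away from its minimizer, so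
`m/2 ‖θ̂′ - θ̂‖² ≤ ℓ̂(θ̂′) - ℓ̂(θ̂)`. On the other hand `ℓ̂ = ℓ̂′ + (ℓ(·, z_j) - ℓ(·, z_j′))/n`
and `θ̂′` minimizes `ℓ̂′`, so the same gap is at most the change of the two swapped terms,
i.e. `2L‖θ̂′ - θ̂‖/n`. Comparing the two bounds gives `‖θ̂′ - θ̂‖ ≤ 4L/(mn)`. -/

open Set

lemma le_of_forall_mem_Ioo_one_sub_mul_le {a b : ℝ} (h : ∀ t ∈ Ioo (0 : ℝ) 1, (1 - t) * a ≤ b) :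
    a ≤ b := by
  have hclosed : IsClosed {t : ℝ | (1 - t) * a ≤ b} := isClosed_le (by fun_prop) continuous_const
  have hzero : (0 : ℝ) ∈ closure (Ioo (0 : ℝ) 1) := by
    rw [closure_Ioo zero_ne_one]
    exact left_mem_Icc.2 zero_le_one
  simpa using hclosed.closure_subset_iff.2 h hzero

lemma UniformConvexOn.le_sub_of_isMinOn {E : Type*} [NormedAddCommGroup E] [NormedSpace ℝ E]
    {s : Set E} {φ : ℝ → ℝ} {f : E → ℝ} {x y : E} (hf : UniformConvexOn s φ f)
    (hmin : IsMinOn f s x) (hx : x ∈ s) (hy : y ∈ s) : φ ‖y - x‖ ≤ f y - f x := by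
  refine le_of_forall_mem_Ioo_one_sub_mul_le fun t ht => ?_
  have hconv := hf.2 hy hx ht.1.le (sub_nonneg.2 ht.2.le) (add_sub_cancel t 1)
  have hle := isMinOn_iff.1 hmin _ (hf.1 hy hx ht.1.le (sub_nonneg.2 ht.2.le) (add_sub_cancel t 1))
  simp only [smul_eq_mul] at hconv
  -- `t (1 - t) φ ≤ t (f y - f x)`; divide by `t > 0`.
  nlinarith [ht.1]

lemma StrongConvexOnUniv.half_mul_sq_norm_sub_le {d : ℕ} {m : ℝ}
    {f : EuclideanSpace ℝ (Fin d) → ℝ} (hf : StrongConvexOnUniv m f) {x : EuclideanSpace ℝ (Fin d)}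
    (hmin : ∀ y, f x ≤ f y) (y : EuclideanSpace ℝ (Fin d)) :
    m / 2 * ‖y - x‖ ^ 2 ≤ f y - f x :=
  (strongConvexOn_iff_convex.2 hf).le_sub_of_isMinOn (isMinOn_univ_iff.2 hmin) (mem_univ x)
    (mem_univ y)

lemma empLoss_eq_empLossPert_add {d n : ℕ} {Z : Type*} (ℓ : EuclideanSpace ℝ (Fin d) → Z → ℝ)
    (z : Fin n → Z) (j : Fin n) (z' : Z) (θ : EuclideanSpace ℝ (Fin d)) :
    empLoss ℓ z θ = empLossPert ℓ z j z' θ + (ℓ θ (z j) - ℓ θ z') / n := by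
  rw [empLoss, empLossPert, ← Finset.sum_erase_add _ _ (Finset.mem_univ j)]
  ring

lemma le_two_mul_div_of_half_mul_sq_le {m c r : ℝ} (hm : 0 < m) (hc : 0 ≤ c) (hr : 0 ≤ r)
    (h : m / 2 * r ^ 2 ≤ c * r) : r ≤ 2 * c / m := by
  rcases hr.eq_or_lt with rfl | hr
  · positivity
  · rw [le_div_iff₀ hm]
    nlinarith

theorem stmt_0_general {d n : ℕ} {Z : Type*} (z : Fin n → Z) (j : Fin n) (z' : Z)
    (ℓ : EuclideanSpace ℝ (Fin d) → Z → ℝ) (m L : ℝ) (hm : 0 < m) (hL : 0 < L)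
    (θhat θhat' : EuclideanSpace ℝ (Fin d))
    (hsc : StrongConvexOnUniv m (empLoss ℓ z))
    (hmin : ∀ θ, empLoss ℓ z θhat ≤ empLoss ℓ z θ)
    (hmin' : ∀ θ, empLossPert ℓ z j z' θhat' ≤ empLossPert ℓ z j z' θ)
    (hlip₁ : |ℓ θhat' (z j) - ℓ θhat (z j)| ≤ L * ‖θhat' - θhat‖)
    (hlip₂ : |ℓ θhat z' - ℓ θhat' z'| ≤ L * ‖θhat' - θhat‖) :
    ‖θhat - θhat'‖ ≤ 4 * L / (m * n) := by
  have hgrowth := hsc.half_mul_sq_norm_sub_le hmin θhat'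
  have hgap : empLoss ℓ z θhat' - empLoss ℓ z θhat ≤ 2 * L / n * ‖θhat' - θhat‖ := by
    have hswap : (ℓ θhat' (z j) - ℓ θhat' z') - (ℓ θhat (z j) - ℓ θhat z') ≤
        2 * L * ‖θhat' - θhat‖ := by
      linarith [le_abs_self (ℓ θhat' (z j) - ℓ θhat (z j)), le_abs_self (ℓ θhat z' - ℓ θhat' z')]
    calc empLoss ℓ z θhat' - empLoss ℓ z θhat
        = (empLossPert ℓ z j z' θhat' - empLossPert ℓ z j z' θhat) +
            ((ℓ θhat' (z j) - ℓ θhat' z') - (ℓ θhat (z j) - ℓ θhat z')) / n := by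
          rw [empLoss_eq_empLossPert_add ℓ z j z', empLoss_eq_empLossPert_add ℓ z j z']
          ring
      _ ≤ 0 + 2 * L * ‖θhat' - θhat‖ / n :=
          add_le_add (sub_nonpos.2 (hmin' θhat)) (div_le_div_of_nonneg_right hswap n.cast_nonneg)
      _ = 2 * L / n * ‖θhat' - θhat‖ := by ring
  rw [norm_sub_rev]
  calc ‖θhat' - θhat‖ ≤ 2 * (2 * L / n) / m :=
        le_two_mul_div_of_half_mul_sq_le hm (by positivity) (norm_nonneg _) (hgrowth.trans hgap)
    _ = 4 * L / (m * n) := by ring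

/-- If `θ̂` minimizes the original empirical loss, `θ̂′` minimizes the perturbed one,
the original empirical loss is `m`-strongly convex, and the losses at the swapped data
points vary Lipschitz-ly between the two minimizers, then `‖θ̂ - θ̂′‖₂ ≤ 4L/(mn)`. -/
theorem stmt_0 {d n : ℕ} (hn : 1 ≤ n) {Z : Type*} (z : Fin n → Z) (j : Fin n) (z' : Z)
    (ℓ : EuclideanSpace ℝ (Fin d) → Z → ℝ) (m L : ℝ) (hm : 0 < m) (hL : 0 < L)
    (θhat θhat' : EuclideanSpace ℝ (Fin d))
    (hsc : StrongConvexOnUniv m (empLoss ℓ z))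
    (hmin : ∀ θ, empLoss ℓ z θhat ≤ empLoss ℓ z θ)
    (hmin' : ∀ θ, empLossPert ℓ z j z' θhat' ≤ empLossPert ℓ z j z' θ)
    (hlip₁ : |ℓ θhat' (z j) - ℓ θhat (z j)| ≤ L * ‖θhat' - θhat‖)
    (hlip₂ : |ℓ θhat z' - ℓ θhat' z'| ≤ L * ‖θhat' - θhat‖) :
    ‖θhat - θhat'‖ ≤ 4 * L / (m * n) :=
  stmt_0_general z j z' ℓ m L hm hL θhat θhat' hsc hmin hmin' hlip₁ hlip₂
end
end

section
/- Let θ̂ minimize the original empirical loss ℓ̂ and θ̂′ minimize the perturbed empirical loss ℓ̂′ over ℝ^d, and assume: (i) ℓ̂ is m-strongly convex (m > 0); (ii) |ℓ(θ̂′, z) − ℓ(θ̂, z)| ≤ L‖θ̂′ − θ̂‖₂ for z ∈ {z_j, z_j′} with L > 0; (iii) for every i ∈ {1,…,n}, ‖∇²_θℓ(θ̂′, z_i) − ∇²_θℓ(θ̂, z_i)‖_op ≤ M‖θ̂′ − θ̂‖₂ for some M > 0; and (iv) ‖∇²_θℓ(θ̂′, z_j)‖_op ≤ B and ‖∇²_θℓ(θ̂′,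 z_j′)‖_op ≤ B for some B > 0. Then the empirical Hessians satisfy ‖H′(θ̂′) − H(θ̂)‖_op ≤ M‖θ̂′ − θ̂‖₂ + 2B/n ≤ 4LM/(m n) + 2B/n. -/
/-!
Strong convexity gives quadratic growth of `ℓ̂` around its minimizer `θ̂`,
`(m/2)‖θ̂′ - θ̂‖² ≤ ℓ̂(θ̂′) - ℓ̂(θ̂)`. Since `θ̂′` minimizes `ℓ̂′` and `ℓ̂ - ℓ̂′` only involves the two
swapped samples, the right side is at most `(2L/n)‖θ̂′ - θ̂‖`, whence `‖θ̂′ - θ̂‖ ≤ 4L/(mn)`.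
The Hessian bound comes from writing `H′(θ̂′) - H(θ̂)` as the average of the per-sample
differences `∇²ℓ(θ̂′, zᵢ) - ∇²ℓ(θ̂, zᵢ)` plus `(∇²ℓ(θ̂′, zⱼ′) - ∇²ℓ(θ̂′, zⱼ))/n`.
-/

noncomputable section

/-- The Hessian `∇²f(θ)` of `f : ℝ^d → ℝ` at `θ`, as a linear operator on `ℝ^d`. -/
def hessian {d : ℕ} (f : EuclideanSpace ℝ (Fin d) → ℝ) (θ : EuclideanSpace ℝ (Fin d)) :
    EuclideanSpace ℝ (Fin d) →L[ℝ] EuclideanSpace ℝ (Fin d) :=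
  fderiv ℝ (fun x => gradient f x) θ

/-- The empirical Hessian `H(θ) = (1/n) ∑ᵢ ∇²_θℓ(θ, zᵢ)`. -/
def empHess {d n : ℕ} {Z : Type*} (ℓ : EuclideanSpace ℝ (Fin d) → Z → ℝ)
    (z : Fin n → Z) (θ : EuclideanSpace ℝ (Fin d)) :
    EuclideanSpace ℝ (Fin d) →L[ℝ] EuclideanSpace ℝ (Fin d) :=
  (1 / (n : ℝ)) • ∑ i, hessian (fun θ' => ℓ θ' (z i)) θ

/-- The perturbed empirical Hessian
`H′(θ) = (1/n) ∑_{i≠j} ∇²_θℓ(θ, zᵢ) + (1/n) ∇²_θℓ(θ, zⱼ′)`. -/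
def empHessPert {d n : ℕ} {Z : Type*} (ℓ : EuclideanSpace ℝ (Fin d) → Z → ℝ)
    (z : Fin n → Z) (j : Fin n) (z' : Z) (θ : EuclideanSpace ℝ (Fin d)) :
    EuclideanSpace ℝ (Fin d) →L[ℝ] EuclideanSpace ℝ (Fin d) :=
  (1 / (n : ℝ)) • ∑ i ∈ Finset.univ.erase j, hessian (fun θ' => ℓ θ' (z i)) θ +
    (1 / (n : ℝ)) • hessian (fun θ' => ℓ θ' z') θ


open Filter Topology Finset

section StrongConvexity

variable {E : Type*} [NormedAddCommGroup E] [NormedSpace ℝ E] {s : Set E} {f g : E → ℝ}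
  {m : ℝ} {x y : E}

lemma StrongConvexOn.mul_sq_norm_sub_le_of_isMinOn (hf : StrongConvexOn s m f) (hx : x ∈ s)
    (hy : y ∈ s) (hmin : IsMinOn f s x) : m / 2 * ‖y - x‖ ^ 2 ≤ f y - f x := by
  set c := m / 2 * ‖y - x‖ ^ 2 with hc
  -- Compare `f x` with `f` at `t • y + (1 - t) • x` and let `t → 0⁺`.
  have hsegment : ∀ t ∈ Set.Ioo (0 : ℝ) 1, (1 - t) * c ≤ f y - f x := by
    rintro t ⟨ht₀, ht₁⟩
    have hconv := hf.2 hy hx ht₀.le (sub_nonneg.2 ht₁.le) (add_sub_cancel t 1)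
    have hle := isMinOn_iff.1 hmin _ (hf.1 hy hx ht₀.le (sub_nonneg.2 ht₁.le) (add_sub_cancel t 1))
    simp only [smul_eq_mul, ← hc] at hconv
    have : t * ((1 - t) * c) ≤ t * (f y - f x) := by linarith
    exact le_of_mul_le_mul_left this ht₀
  have hlim : Tendsto (fun t : ℝ => (1 - t) * c) (𝓝[>] 0) (𝓝 c) := by
    have : Tendsto (fun t : ℝ => (1 - t) * c) (𝓝 0) (𝓝 ((1 - 0) * c)) :=
      ((continuous_const.sub continuous_id).mul continuous_const).tendsto 0
    simpa using this.mono_left nhdsWithin_le_nhds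
  exact le_of_tendsto hlim <| eventually_of_mem (Ioo_mem_nhdsGT one_pos) hsegment

lemma StrongConvexOn.norm_sub_le_of_isMinOn (hf : StrongConvexOn s m f) (hm : 0 < m)
    (hx : x ∈ s) (hy : y ∈ s) (hfx : IsMinOn f s x) (hgy : IsMinOn g s y) {c : ℝ} (hc : 0 ≤ c)
    (hfg : (f y - g y) - (f x - g x) ≤ c * ‖y - x‖) : ‖y - x‖ ≤ 2 * c / m := by
  have hgrowth := hf.mul_sq_norm_sub_le_of_isMinOn hx hy hfx
  have hg := isMinOn_iff.1 hgy x hx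
  rw [le_div_iff₀ hm]
  rcases (norm_nonneg (y - x)).eq_or_lt with hD | hD
  · rw [← hD, zero_mul]; positivity
  · nlinarith

end StrongConvexity

lemma norm_inv_card_smul_sum_le {ι F : Type*} [Fintype ι] [Nonempty ι]
    [SeminormedAddCommGroup F] [NormedSpace ℝ F] {v : ι → F} {K : ℝ} (hv : ∀ i, ‖v i‖ ≤ K) :
    ‖(1 / (Fintype.card ι : ℝ)) • ∑ i, v i‖ ≤ K := by
  have hcard : (0 : ℝ) < Fintype.card ι := by exact_mod_cast Fintype.card_pos
  rw [norm_smul, Real.norm_of_nonneg (by positivity), one_div, inv_mul_le_iff₀ hcard]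
  simpa using norm_sum_le_of_le univ fun i _ => hv i

section EmpiricalRisk

variable {d n : ℕ} {Z : Type*} (ℓ : EuclideanSpace ℝ (Fin d) → Z → ℝ) (z : Fin n → Z) (j : Fin n)
  (z' : Z)

lemma empLoss_sub_empLossPert (θ : EuclideanSpace ℝ (Fin d)) :
    empLoss ℓ z θ - empLossPert ℓ z j z' θ = (ℓ θ (z j) - ℓ θ z') / n := by
  rw [empLoss, empLossPert, ← add_sum_erase _ _ (mem_univ j)]
  ring

lemma empHessPert_sub_empHess (θ θ' : EuclideanSpace ℝ (Fin d)) :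
    empHessPert ℓ z j z' θ' - empHess ℓ z θ =
      (1 / (n : ℝ)) • ∑ i, (hessian (ℓ · (z i)) θ' - hessian (ℓ · (z i)) θ) +
        (1 / (n : ℝ)) • (hessian (ℓ · z') θ' - hessian (ℓ · (z j)) θ') := by
  rw [empHessPert, empHess, sum_erase_eq_sub (mem_univ j), sum_sub_distrib]
  module

lemma norm_empHessPert_sub_empHess_le {θ θ' : EuclideanSpace ℝ (Fin d)} {K B : ℝ}
    (hK : ∀ i, ‖hessian (ℓ · (z i)) θ' - hessian (ℓ · (z i)) θ‖ ≤ K)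
    (hBj : ‖hessian (ℓ · (z j)) θ'‖ ≤ B) (hB' : ‖hessian (ℓ · z') θ'‖ ≤ B) :
    ‖empHessPert ℓ z j z' θ' - empHess ℓ z θ‖ ≤ K + 2 * B / n := by
  have : Nonempty (Fin n) := ⟨j⟩
  have hn : (0 : ℝ) < n := by exact_mod_cast j.pos
  have hswap : ‖(1 / (n : ℝ)) • (hessian (ℓ · z') θ' - hessian (ℓ · (z j)) θ')‖ ≤ 2 * B / n := by
    rw [norm_smul, Real.norm_of_nonneg (by positivity), one_div_mul_eq_div]
    gcongr
    linarith [norm_sub_le (hessian (ℓ · z') θ') (hessian (ℓ · (z j)) θ')]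
  have havg := norm_inv_card_smul_sum_le hK
  rw [Fintype.card_fin] at havg
  rw [empHessPert_sub_empHess]
  exact (norm_add_le _ _).trans (add_le_add havg hswap)

end EmpiricalRisk

theorem stmt_6_general {d n : ℕ} {Z : Type*} (z : Fin n → Z) (j : Fin n) (z' : Z)
    (ℓ : EuclideanSpace ℝ (Fin d) → Z → ℝ)
    (m L M B : ℝ) (hm : 0 < m) (hL : 0 < L) (hM : 0 < M)
    (θhat θhat' : EuclideanSpace ℝ (Fin d))
    (hsc : StrongConvexOnUniv m (empLoss ℓ z))
    (hmin : ∀ θ, empLoss ℓ z θhat ≤ empLoss ℓ z θ)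
    (hmin' : ∀ θ, empLossPert ℓ z j z' θhat' ≤ empLossPert ℓ z j z' θ)
    (hlip₁ : |ℓ θhat' (z j) - ℓ θhat (z j)| ≤ L * ‖θhat' - θhat‖)
    (hlip₂ : |ℓ θhat z' - ℓ θhat' z'| ≤ L * ‖θhat' - θhat‖)
    (hhessLip : ∀ i : Fin n,
      ‖hessian (fun θ' => ℓ θ' (z i)) θhat' - hessian (fun θ' => ℓ θ' (z i)) θhat‖ ≤
        M * ‖θhat' - θhat‖)
    (hhessB₁ : ‖hessian (fun θ' => ℓ θ' (z j)) θhat'‖ ≤ B)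
    (hhessB₂ : ‖hessian (fun θ' => ℓ θ' z') θhat'‖ ≤ B) :
    ‖empHessPert ℓ z j z' θhat' - empHess ℓ z θhat‖ ≤ M * ‖θhat' - θhat‖ + 2 * B / n ∧
      M * ‖θhat' - θhat‖ + 2 * B / n ≤ 4 * L * M / (m * n) + 2 * B / n := by
  have hn : (0 : ℝ) < n := by exact_mod_cast j.pos
  have hswap : (empLoss ℓ z θhat' - empLossPert ℓ z j z' θhat') -
      (empLoss ℓ z θhat - empLossPert ℓ z j z' θhat) ≤ 2 * L / n * ‖θhat' - θhat‖ := by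
    rw [empLoss_sub_empLossPert, empLoss_sub_empLossPert, ← sub_div, div_mul_eq_mul_div,
      div_le_div_iff_of_pos_right hn]
    linarith [(abs_le.1 hlip₁).2, (abs_le.1 hlip₂).2]
  have hstable : ‖θhat' - θhat‖ ≤ 4 * L / (m * n) := by
    have := (strongConvexOn_iff_convex.2 hsc).norm_sub_le_of_isMinOn hm (Set.mem_univ _)
      (Set.mem_univ _) (isMinOn_univ_iff.2 hmin) (isMinOn_univ_iff.2 hmin') (by positivity) hswap
    convert this using 1
    field_simp
    ring
  refine ⟨norm_empHessPert_sub_empHess_le ℓ z j z' hhessLip hhessB₁ hhessB₂, ?_⟩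
  calc M * ‖θhat' - θhat‖ + 2 * B / n ≤ M * (4 * L / (m * n)) + 2 * B / n := by gcongr
    _ = 4 * L * M / (m * n) + 2 * B / n := by ring

/-- Under strong convexity, the pointwise Lipschitz bounds on the swapped losses, the
`M`-Lipschitzness of the per-sample Hessians between the two minimizers, and the `B`-bound
on the Hessians at the swapped points, the empirical Hessians satisfy
`‖H′(θ̂′) - H(θ̂)‖_op ≤ M‖θ̂′ - θ̂‖₂ + 2B/n ≤ 4LM/(mn) + 2B/n`. -/
theorem stmt_6 {d n : ℕ} (hn : 1 ≤ n) {Z : Type*} (z : Fin n → Z) (j : Fin n) (z' : Z)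
    (ℓ : EuclideanSpace ℝ (Fin d) → Z → ℝ)
    (hC2 : ∀ zz : Z, ContDiff ℝ 2 (fun θ => ℓ θ zz))
    (m L M B : ℝ) (hm : 0 < m) (hL : 0 < L) (hM : 0 < M) (hB : 0 < B)
    (θhat θhat' : EuclideanSpace ℝ (Fin d))
    (hsc : StrongConvexOnUniv m (empLoss ℓ z))
    (hmin : ∀ θ, empLoss ℓ z θhat ≤ empLoss ℓ z θ)
    (hmin' : ∀ θ, empLossPert ℓ z j z' θhat' ≤ empLossPert ℓ z j z' θ)
    (hlip₁ : |ℓ θhat' (z j) - ℓ θhat (z j)| ≤ L * ‖θhat' - θhat‖)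
    (hlip₂ : |ℓ θhat z' - ℓ θhat' z'| ≤ L * ‖θhat' - θhat‖)
    (hhessLip : ∀ i : Fin n,
      ‖hessian (fun θ' => ℓ θ' (z i)) θhat' - hessian (fun θ' => ℓ θ' (z i)) θhat‖ ≤
        M * ‖θhat' - θhat‖)
    (hhessB₁ : ‖hessian (fun θ' => ℓ θ' (z j)) θhat'‖ ≤ B)
    (hhessB₂ : ‖hessian (fun θ' => ℓ θ' z') θhat'‖ ≤ B) :
    ‖empHessPert ℓ z j z' θhat' - empHess ℓ z θhat‖ ≤ M * ‖θhat' - θhat‖ + 2 * B / n ∧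
      M * ‖θhat' - θhat‖ + 2 * B / n ≤ 4 * L * M / (m * n) + 2 * B / n :=
  stmt_6_general z j z' ℓ m L M B hm hL hM θhat θhat' hsc hmin hmin' hlip₁ hlip₂ hhessLip hhessB₁
    hhessB₂
end
end
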